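/- arXiv:2112.00670 — 2 statements merged into one kernel-verified Lean document; each statement's English description precedes it below -/
import Mathlib

section
/- Let μ₀ and μ₁ be probability measures on a measurable space, both absolutely continuous with respect to ν = μ₀ + μ₁, with densities p₀ and p₁. For c ≥ 0 and χ ∈ [0,1], define the Neyman–Pearson test φ(ω) = 1 if p₁(ω) > c·p₀(ω), φ(ω) = χ if p₁(ω) = c·p₀(ω), and φ(ω) = 0 if p₁(ω) < c·p₀(ω). Then for every measurable test ψ : Ω → [0,1] with ∫ ψ dμ₀ ≤ ∫ φ dμ₀, one has ∫ ψ dμ₁ ≤ ∫ φ dμ₁. -/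
open MeasureTheory

theorem stmt_2 {Ω : Type*} [MeasurableSpace Ω] (μ₀ μ₁ : Measure Ω)
    [IsProbabilityMeasure μ₀] [IsProbabilityMeasure μ₁]
    (p₀ p₁ : Ω → ℝ) (hp₀m : Measurable p₀) (hp₁m : Measurable p₁)
    (hp₀ : ∀ ω, 0 ≤ p₀ ω) (hp₁ : ∀ ω, 0 ≤ p₁ ω)
    (hd₀ : μ₀ = (μ₀ + μ₁).withDensity (fun ω => ENNReal.ofReal (p₀ ω)))
    (hd₁ : μ₁ = (μ₀ + μ₁).withDensity (fun ω => ENNReal.ofReal (p₁ ω)))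
    (c : ℝ) (hc : 0 ≤ c) (χ : ℝ) (hχ : χ ∈ Set.Icc (0 : ℝ) 1)
    (φ : Ω → ℝ)
    (hφ : ∀ ω, φ ω = if c * p₀ ω < p₁ ω then 1
                     else if p₁ ω = c * p₀ ω then χ else 0) :
    ∀ ψ : Ω → ℝ, Measurable ψ → (∀ ω, 0 ≤ ψ ω ∧ ψ ω ≤ 1) →
      (∫ ω, ψ ω ∂μ₀) ≤ (∫ ω, φ ω ∂μ₀) →
      (∫ ω, ψ ω ∂μ₁) ≤ (∫ ω, φ ω ∂μ₁) := by
  intro ψ hψm hψb hψ0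
  set ν := μ₀ + μ₁ with hν
  -- φ measurable and bounded
  have hφm : Measurable φ := by
    have h : φ = fun ω => if c * p₀ ω < p₁ ω then 1 else if p₁ ω = c * p₀ ω then χ else 0 :=
      funext hφ
    rw [h]
    exact Measurable.ite (measurableSet_lt (hp₀m.const_mul c) hp₁m) measurable_const
      (Measurable.ite (measurableSet_eq_fun hp₁m (hp₀m.const_mul c)) measurable_const
        measurable_const)
  have hφb : ∀ ω, 0 ≤ φ ω ∧ φ ω ≤ 1 := by
    intro ω; rw [hφ ω]
    split_ifs <;> constructor <;> linarith [hχ.1, hχ.2]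
  -- integrability of p₀, p₁ w.r.t. ν
  have hintp : ∀ (p : Ω → ℝ) (μ : Measure Ω), Measurable p → (∀ ω, 0 ≤ p ω) →
      IsProbabilityMeasure μ →
      μ = ν.withDensity (fun ω => ENNReal.ofReal (p ω)) → Integrable p ν := by
    intro p μ hpm hpn hprob hd
    refine ⟨hpm.aestronglyMeasurable, ?_⟩
    rw [hasFiniteIntegral_iff_ofReal (ae_of_all _ hpn)]
    have : ∫⁻ ω, ENNReal.ofReal (p ω) ∂ν = μ Set.univ := by
      rw [hd, withDensity_apply _ MeasurableSet.univ, setLIntegral_univ]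
    rw [this]
    simp [hprob.measure_univ]
  have hintp₀ : Integrable p₀ ν := hintp p₀ μ₀ hp₀m hp₀ inferInstance hd₀
  have hintp₁ : Integrable p₁ ν := hintp p₁ μ₁ hp₁m hp₁ inferInstance hd₁
  -- translation of integrals
  have htrans : ∀ (p : Ω → ℝ) (μ : Measure Ω) (g : Ω → ℝ), Measurable p → (∀ ω, 0 ≤ p ω) →
      μ = ν.withDensity (fun ω => ENNReal.ofReal (p ω)) →
      ∫ ω, g ω ∂μ = ∫ ω, g ω * p ω ∂ν := by
    intro p μ g hpm hpn hd
    rw [hd]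
    have h1 : ∫ ω, g ω ∂(ν.withDensity (fun ω => ENNReal.ofReal (p ω)))
        = ∫ ω, (p ω).toNNReal • g ω ∂ν :=
      integral_withDensity_eq_integral_smul (hpm.real_toNNReal) g
    rw [h1]
    congr 1
    funext ω
    rw [NNReal.smul_def, Real.coe_toNNReal _ (hpn ω), smul_eq_mul, mul_comm]
  have hφ0 := htrans p₀ μ₀ φ hp₀m hp₀ hd₀
  have hψ0' := htrans p₀ μ₀ ψ hp₀m hp₀ hd₀
  have hφ1 := htrans p₁ μ₁ φ hp₁m hp₁ hd₁
  have hψ1' := htrans p₁ μ₁ ψ hp₁m hp₁ hd₁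
  -- integrability of products
  have hintprod : ∀ (g p : Ω → ℝ), Measurable g → (∀ ω, 0 ≤ g ω ∧ g ω ≤ 1) →
      Measurable p → (∀ ω, 0 ≤ p ω) → Integrable p ν → Integrable (fun ω => g ω * p ω) ν := by
    intro g p hgm hgb hpm hpn hpint
    refine hpint.mono (hgm.mul hpm).aestronglyMeasurable (ae_of_all _ fun ω => ?_)
    rw [Real.norm_eq_abs, Real.norm_eq_abs, abs_of_nonneg (hpn ω),
      abs_of_nonneg (mul_nonneg (hgb ω).1 (hpn ω))]
    nlinarith [(hgb ω).1, (hgb ω).2, hpn ω]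
  have i1 : Integrable (fun ω => φ ω * p₁ ω) ν := hintprod φ p₁ hφm hφb hp₁m hp₁ hintp₁
  have i2 : Integrable (fun ω => ψ ω * p₁ ω) ν := hintprod ψ p₁ hψm hψb hp₁m hp₁ hintp₁
  have i3 : Integrable (fun ω => φ ω * p₀ ω) ν := hintprod φ p₀ hφm hφb hp₀m hp₀ hintp₀
  have i4 : Integrable (fun ω => ψ ω * p₀ ω) ν := hintprod ψ p₀ hψm hψb hp₀m hp₀ hintp₀
  -- key pointwise inequality
  have key : ∀ ω, 0 ≤ (φ ω - ψ ω) * (p₁ ω - c * p₀ ω) := by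
    intro ω
    rcases lt_trichotomy (c * p₀ ω) (p₁ ω) with h | h | h
    · have : φ ω = 1 := by rw [hφ ω, if_pos h]
      nlinarith [(hψb ω).2]
    · have : p₁ ω - c * p₀ ω = 0 := by linarith
      rw [this, mul_zero]
    · have : φ ω = 0 := by
        rw [hφ ω, if_neg (by linarith), if_neg (by linarith)]
      nlinarith [(hψb ω).1]
  -- integrate
  have hint0 : 0 ≤ ∫ ω, (φ ω - ψ ω) * (p₁ ω - c * p₀ ω) ∂ν :=
    integral_nonneg key
  have hexp : ∫ ω, (φ ω - ψ ω) * (p₁ ω - c * p₀ ω) ∂ν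
      = (∫ ω, φ ω * p₁ ω ∂ν) - (∫ ω, ψ ω * p₁ ω ∂ν)
        - c * ((∫ ω, φ ω * p₀ ω ∂ν) - (∫ ω, ψ ω * p₀ ω ∂ν)) := by
    have : (fun ω => (φ ω - ψ ω) * (p₁ ω - c * p₀ ω))
        = fun ω => (φ ω * p₁ ω - ψ ω * p₁ ω) - c * (φ ω * p₀ ω - ψ ω * p₀ ω) := by
      funext ω; ring
    rw [this]
    have e1 : ∫ ω, ((φ ω * p₁ ω - ψ ω * p₁ ω) - c * (φ ω * p₀ ω - ψ ω * p₀ ω)) ∂ν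
        = (∫ ω, (φ ω * p₁ ω - ψ ω * p₁ ω) ∂ν) - ∫ ω, c * (φ ω * p₀ ω - ψ ω * p₀ ω) ∂ν :=
      integral_sub (i1.sub i2) ((i3.sub i4).const_mul c)
    have e2 : ∫ ω, (φ ω * p₁ ω - ψ ω * p₁ ω) ∂ν
        = (∫ ω, φ ω * p₁ ω ∂ν) - ∫ ω, ψ ω * p₁ ω ∂ν := integral_sub i1 i2
    have e3 : ∫ ω, c * (φ ω * p₀ ω - ψ ω * p₀ ω) ∂ν
        = c * ∫ ω, (φ ω * p₀ ω - ψ ω * p₀ ω) ∂ν := integral_const_mul c _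
    have e4 : ∫ ω, (φ ω * p₀ ω - ψ ω * p₀ ω) ∂ν
        = (∫ ω, φ ω * p₀ ω ∂ν) - ∫ ω, ψ ω * p₀ ω ∂ν := integral_sub i3 i4
    rw [e1, e2, e3, e4]
  rw [hexp] at hint0
  have h0 : (∫ ω, ψ ω * p₀ ω ∂ν) ≤ ∫ ω, φ ω * p₀ ω ∂ν := by
    rw [← hψ0', ← hφ0]; exact hψ0
  rw [hψ1', hφ1]
  nlinarith
end

section
/- Suppose μ₀, μ₁ are probability measures on a finite set Ω_n and ψ is a minimax test. If there exists a most powerful test at level α' with power strictly larger than the power of ψ while maintaining type 2 error at most that of ψ, then ψ is not minimax unless ∫ ψ dμ₀ = 1 − ∫ ψ dμ₁. Consequently, there exists a minimax test ψ* which is a Neyman–Pearson test and satisfies the equalizer property ∫ ψ* dμ₀ = 1 − ∫ ψ* dμ₁, provided the power function α ↦ β(α) of the Neyman–Pearson tests is continuous. -/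
open MeasureTheory

/-- A randomized test on a finite sample space: values in `[0,1]`. -/
def IsTest {Ω : Type*} (ψ : Ω → ℝ) : Prop := ∀ ω, 0 ≤ ψ ω ∧ ψ ω ≤ 1

/-- Minimax test: minimizes the maximum of type 1 and type 2 errors. -/
def IsMinimax {Ω : Type*} [MeasurableSpace Ω] (μ₀ μ₁ : Measure Ω) (ψ : Ω → ℝ) : Prop :=
  IsTest ψ ∧ ∀ ψ' : Ω → ℝ, IsTest ψ' →
    max (∫ ω, ψ ω ∂μ₀) (∫ ω, (1 - ψ ω) ∂μ₁)
      ≤ max (∫ ω, ψ' ω ∂μ₀) (∫ ω, (1 - ψ' ω) ∂μ₁)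

/-- Most powerful test at level `α`. -/
def IsMostPowerful {Ω : Type*} [MeasurableSpace Ω] (μ₀ μ₁ : Measure Ω) (α : ℝ)
    (φ : Ω → ℝ) : Prop :=
  IsTest φ ∧ (∫ ω, φ ω ∂μ₀) ≤ α ∧
    ∀ ψ : Ω → ℝ, IsTest ψ → (∫ ω, ψ ω ∂μ₀) ≤ α → (∫ ω, ψ ω ∂μ₁) ≤ ∫ ω, φ ω ∂μ₁

/-- A Neyman–Pearson (likelihood-ratio) test of size exactly `α`. -/
def IsNeymanPearson {Ω : Type*} [MeasurableSpace Ω] (μ₀ μ₁ : Measure Ω) (α : ℝ)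
    (ψ : Ω → ℝ) : Prop :=
  ∃ c : ℝ, 0 ≤ c ∧ ∃ χ ∈ Set.Icc (0 : ℝ) 1,
    (∀ ω : Ω, ψ ω =
      if c * (μ₀ {ω}).toReal < (μ₁ {ω}).toReal then 1
      else if (μ₁ {ω}).toReal = c * (μ₀ {ω}).toReal then χ else 0) ∧
    (∫ ω, ψ ω ∂μ₀) = α

section Aux

set_option linter.unusedSectionVars false
variable {Ω : Type*} [Fintype Ω] [MeasurableSpace Ω] [MeasurableSingletonClass Ω]

lemma int_eq_sum (μ : Measure Ω) [IsFiniteMeasure μ] (f : Ω → ℝ) :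
    ∫ ω, f ω ∂μ = ∑ ω, f ω * (μ {ω}).toReal := by
  rw [integral_fintype Integrable.of_finite]
  simp [mul_comm, Measure.real]

lemma sum_p_one (μ : Measure Ω) [IsProbabilityMeasure μ] :
    ∑ ω : Ω, (μ {ω}).toReal = 1 := by
  have := int_eq_sum μ (fun _ => (1:ℝ))
  simpa using this.symm

lemma p_nonneg (μ : Measure Ω) (ω : Ω) : 0 ≤ (μ {ω}).toReal := ENNReal.toReal_nonneg

lemma int_one_sub (μ : Measure Ω) [IsProbabilityMeasure μ] (f : Ω → ℝ) :
    ∫ ω, (1 - f ω) ∂μ = 1 - ∫ ω, f ω ∂μ := by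
  rw [integral_sub (integrable_const 1) Integrable.of_finite]
  simp

lemma int_nonneg (μ : Measure Ω) [IsProbabilityMeasure μ] {f : Ω → ℝ} (hf : IsTest f) :
    0 ≤ ∫ ω, f ω ∂μ := by
  rw [int_eq_sum]
  exact Finset.sum_nonneg fun ω _ => mul_nonneg (hf ω).1 (p_nonneg μ ω)

lemma int_le_one (μ : Measure Ω) [IsProbabilityMeasure μ] {f : Ω → ℝ} (hf : IsTest f) :
    ∫ ω, f ω ∂μ ≤ 1 := by
  rw [int_eq_sum]
  calc ∑ ω, f ω * (μ {ω}).toReal ≤ ∑ ω, (μ {ω}).toReal :=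
        Finset.sum_le_sum fun ω _ => by
          nlinarith [(hf ω).1, (hf ω).2, p_nonneg μ ω]
    _ = 1 := sum_p_one μ

variable (μ₀ μ₁ : Measure Ω) [IsProbabilityMeasure μ₀] [IsProbabilityMeasure μ₁]

/-- The Neyman–Pearson lemma: an NP test of size α is most powerful at level α. -/
lemma np_most_powerful {α : ℝ} {ψ : Ω → ℝ} (h : IsNeymanPearson μ₀ μ₁ α ψ) :
    IsMostPowerful μ₀ μ₁ α ψ := by
  obtain ⟨c, hc, χ, hχ, hψ, hsize⟩ := h
  have htest : IsTest ψ := by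
    intro ω; rw [hψ ω]
    split_ifs <;> simp [hχ.1, hχ.2]
  refine ⟨htest, le_of_eq hsize, ?_⟩
  intro φ hφ hφα
  set p₀ : Ω → ℝ := fun ω => (μ₀ {ω}).toReal
  set p₁ : Ω → ℝ := fun ω => (μ₁ {ω}).toReal
  have key : ∀ ω, 0 ≤ (ψ ω - φ ω) * (p₁ ω - c * p₀ ω) := by
    intro ω
    rcases lt_trichotomy (c * p₀ ω) (p₁ ω) with h1 | h1 | h1
    · have : ψ ω = 1 := by rw [hψ ω, if_pos h1]
      nlinarith [(hφ ω).2]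
    · have : p₁ ω - c * p₀ ω = 0 := by linarith
      simp [this]
    · have : ψ ω = 0 := by rw [hψ ω, if_neg (by linarith), if_neg (by intro h; linarith)]
      nlinarith [(hφ ω).1]
  have hsum : 0 ≤ ∑ ω, (ψ ω - φ ω) * (p₁ ω - c * p₀ ω) :=
    Finset.sum_nonneg fun ω _ => key ω
  have e1 : ∑ ω, (ψ ω - φ ω) * (p₁ ω - c * p₀ ω)
      = (∫ ω, ψ ω ∂μ₁ - ∫ ω, φ ω ∂μ₁) - c * (∫ ω, ψ ω ∂μ₀ - ∫ ω, φ ω ∂μ₀) := by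
    rw [int_eq_sum μ₁ ψ, int_eq_sum μ₁ φ, int_eq_sum μ₀ ψ, int_eq_sum μ₀ φ]
    rw [← Finset.sum_sub_distrib, ← Finset.sum_sub_distrib, Finset.mul_sum,
      ← Finset.sum_sub_distrib]
    exact Finset.sum_congr rfl fun ω _ => by ring
  have h2 : 0 ≤ c * (∫ ω, ψ ω ∂μ₀ - ∫ ω, φ ω ∂μ₀) := by
    apply mul_nonneg hc; rw [hsize]; linarith
  linarith [e1 ▸ hsum]


lemma np_is_test {α : ℝ} {ψ : Ω → ℝ} (h : IsNeymanPearson μ₀ μ₁ α ψ) : IsTest ψ := by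
  obtain ⟨c, hc, χ, hχ, hψ, -⟩ := h
  intro ω; rw [hψ ω]
  split_ifs <;> simp [hχ.1, hχ.2]

lemma int_comb (μ : Measure Ω) [IsProbabilityMeasure μ] (a b : ℝ) (f g : Ω → ℝ) :
    ∫ ω, (a * f ω + b * g ω) ∂μ = a * ∫ ω, f ω ∂μ + b * ∫ ω, g ω ∂μ := by
  rw [int_eq_sum, int_eq_sum, int_eq_sum, Finset.mul_sum, Finset.mul_sum,
    ← Finset.sum_add_distrib]
  exact Finset.sum_congr rfl fun ω _ => by ring

lemma int_smul (μ : Measure Ω) [IsProbabilityMeasure μ] (a : ℝ) (f : Ω → ℝ) :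
    ∫ ω, a * f ω ∂μ = a * ∫ ω, f ω ∂μ := by
  rw [int_eq_sum, int_eq_sum, Finset.mul_sum]
  exact Finset.sum_congr rfl fun ω _ => by ring

lemma np_exists (α : ℝ) (hα0 : 0 ≤ α) (hα1 : α ≤ 1) :
    ∃ ψ : Ω → ℝ, IsNeymanPearson μ₀ μ₁ α ψ := by
  classical
  set p₀ : Ω → ℝ := fun ω => (μ₀ {ω}).toReal with hp₀def
  set p₁ : Ω → ℝ := fun ω => (μ₁ {ω}).toReal with hp₁def
  have p₀n : ∀ ω, 0 ≤ p₀ ω := fun ω => ENNReal.toReal_nonneg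
  have p₁n : ∀ ω, 0 ≤ p₁ ω := fun ω => ENNReal.toReal_nonneg
  set G : ℝ → ℝ := fun c => ∑ ω, if c * p₀ ω < p₁ ω then p₀ ω else 0 with hGdef
  set D : ℝ → ℝ := fun c => ∑ ω, if p₁ ω = c * p₀ ω then p₀ ω else 0 with hDdef
  set H : ℝ → ℝ := fun c => ∑ ω, if c * p₀ ω ≤ p₁ ω then p₀ ω else 0 with hHdef
  have hGD : ∀ c, G c + D c = H c := by
    intro c
    rw [hGdef, hDdef, hHdef, ← Finset.sum_add_distrib]
    refine Finset.sum_congr rfl fun ω _ => ?_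
    by_cases h1 : c * p₀ ω < p₁ ω
    · rw [if_pos h1, if_pos (le_of_lt h1), if_neg (by intro h; linarith)]; ring
    · by_cases h2 : p₁ ω = c * p₀ ω
      · rw [if_neg h1, if_pos h2, if_pos (le_of_eq h2.symm)]; ring
      · rw [if_neg h1, if_neg h2, if_neg (fun h => h2 (le_antisymm (not_lt.mp h1) h))]; ring
  have Dn : ∀ c, 0 ≤ D c :=
    fun c => Finset.sum_nonneg fun ω _ => by split_ifs <;> simp [p₀n ω]
  have Hle1 : ∀ c, H c ≤ 1 := by
    intro c
    calc H c ≤ ∑ ω, p₀ ω :=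
          Finset.sum_le_sum fun ω _ => by split_ifs <;> simp [p₀n ω]
      _ = 1 := sum_p_one μ₀
  set C : Finset ℝ := insert 0 (Finset.univ.image fun ω => p₁ ω / p₀ ω) with hCdef
  have hC0 : (0:ℝ) ∈ C := Finset.mem_insert_self _ _
  have hCne : C.Nonempty := ⟨0, hC0⟩
  have hCnonneg : ∀ c ∈ C, 0 ≤ c := by
    intro c hc
    rcases Finset.mem_insert.mp hc with h | h
    · simp [h]
    · obtain ⟨ω, _, rfl⟩ := Finset.mem_image.mp h
      exact div_nonneg (p₁n ω) (p₀n ω)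
  have hratio : ∀ ω, p₁ ω / p₀ ω ∈ C :=
    fun ω => Finset.mem_insert_of_mem (Finset.mem_image_of_mem _ (Finset.mem_univ ω))
  set S : Finset ℝ := C.filter (fun c => G c ≤ α) with hSdef
  have hSne : S.Nonempty := by
    refine ⟨C.max' hCne, Finset.mem_filter.mpr ⟨C.max'_mem hCne, ?_⟩⟩
    have hz : G (C.max' hCne) = 0 := by
      apply Finset.sum_eq_zero
      intro ω _
      by_cases h0 : p₀ ω = 0
      · split_ifs <;> simp [h0]
      · rw [if_neg]
        intro hlt
        have hp : 0 < p₀ ω := lt_of_le_of_ne (p₀n ω) (Ne.symm h0)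
        have h2 : C.max' hCne < p₁ ω / p₀ ω := by rwa [lt_div_iff₀ hp]
        exact absurd (C.le_max' _ (hratio ω)) (not_le.mpr h2)
    rw [hz]; exact hα0
  set cs : ℝ := S.min' hSne with hcsdef
  have hcsS : cs ∈ S := S.min'_mem hSne
  have hcsC : cs ∈ C := (Finset.mem_filter.mp hcsS).1
  have hcsG : G cs ≤ α := (Finset.mem_filter.mp hcsS).2
  have hcs0 : 0 ≤ cs := hCnonneg _ hcsC
  have hαH : α ≤ H cs := by
    by_cases hT : (C.filter (fun c => c < cs)).Nonempty
    · set c' := (C.filter (fun c => c < cs)).max' hT with hc'def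
      have hc'mem := (C.filter (fun c => c < cs)).max'_mem hT
      have hc'C : c' ∈ C := (Finset.mem_filter.mp hc'mem).1
      have hc'lt : c' < cs := (Finset.mem_filter.mp hc'mem).2
      have hc'G : α < G c' := by
        by_contra h
        push_neg at h
        have : cs ≤ c' := S.min'_le c' (Finset.mem_filter.mpr ⟨hc'C, h⟩)
        linarith
      have hGH : G c' ≤ H cs := by
        apply Finset.sum_le_sum
        intro ω _
        by_cases h1 : c' * p₀ ω < p₁ ω
        · by_cases h0 : p₀ ω = 0
          · split_ifs <;> simp [h0]
          · have hp : 0 < p₀ ω := lt_of_le_of_ne (p₀n ω) (Ne.symm h0)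
            have hr : c' < p₁ ω / p₀ ω := by rwa [lt_div_iff₀ hp]
            have hge : cs ≤ p₁ ω / p₀ ω := by
              by_contra hlt2
              push_neg at hlt2
              have hmem2 : p₁ ω / p₀ ω ∈ C.filter (fun c => c < cs) :=
                Finset.mem_filter.mpr ⟨hratio ω, hlt2⟩
              have := Finset.le_max' (C.filter (fun c => c < cs)) _ hmem2
              linarith
            have hcsle : cs * p₀ ω ≤ p₁ ω := (le_div_iff₀ hp).mp hge
            rw [if_pos h1, if_pos hcsle]
        · rw [if_neg h1]
          split_ifs <;> simp [p₀n ω]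
      linarith
    · have h1 : cs ≤ 0 := by
        by_contra h
        push_neg at h
        exact hT ⟨0, Finset.mem_filter.mpr ⟨hC0, h⟩⟩
      have hcs00 : cs = 0 := le_antisymm h1 hcs0
      have : H cs = 1 := by
        rw [hcs00, hHdef]
        calc (∑ ω, if (0:ℝ) * p₀ ω ≤ p₁ ω then p₀ ω else 0) = ∑ ω, p₀ ω :=
              Finset.sum_congr rfl fun ω _ => by rw [if_pos (by simpa using p₁n ω)]
          _ = 1 := sum_p_one μ₀
      linarith
  set χ : ℝ := if D cs = 0 then 0 else (α - G cs) / D cs with hχdef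
  have hχmem : χ ∈ Set.Icc (0:ℝ) 1 := by
    rw [hχdef]
    split_ifs with hD
    · exact ⟨le_refl 0, zero_le_one⟩
    · have hDpos : 0 < D cs := lt_of_le_of_ne (Dn cs) (Ne.symm hD)
      constructor
      · exact div_nonneg (by linarith) (le_of_lt hDpos)
      · rw [div_le_one hDpos]
        have := hGD cs
        linarith
  refine ⟨fun ω => if cs * p₀ ω < p₁ ω then 1 else if p₁ ω = cs * p₀ ω then χ else 0,
    cs, hcs0, χ, hχmem, fun ω => rfl, ?_⟩
  rw [int_eq_sum]
  have e1 : ∀ ω, (if cs * p₀ ω < p₁ ω then (1:ℝ) else if p₁ ω = cs * p₀ ω then χ else 0) * p₀ ω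
      = (if cs * p₀ ω < p₁ ω then p₀ ω else 0) + χ * (if p₁ ω = cs * p₀ ω then p₀ ω else 0) := by
    intro ω
    by_cases h1 : cs * p₀ ω < p₁ ω
    · rw [if_pos h1, if_pos h1, if_neg (by intro h; linarith)]; ring
    · by_cases h2 : p₁ ω = cs * p₀ ω
      · rw [if_neg h1, if_neg h1, if_pos h2, if_pos h2]; ring
      · rw [if_neg h1, if_neg h1, if_neg h2, if_neg h2]; ring
  calc (∑ ω, (if cs * p₀ ω < p₁ ω then (1:ℝ) else if p₁ ω = cs * p₀ ω then χ else 0) * p₀ ω)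
      = ∑ ω, ((if cs * p₀ ω < p₁ ω then p₀ ω else 0) + χ * (if p₁ ω = cs * p₀ ω then p₀ ω else 0)) :=
        Finset.sum_congr rfl fun ω _ => e1 ω
    _ = G cs + χ * D cs := by
        rw [Finset.sum_add_distrib, ← Finset.mul_sum, hGdef, hDdef]
    _ = α := by
        rw [hχdef]
        split_ifs with hD
        · have := hGD cs
          rw [hD] at this ⊢
          nlinarith
        · rw [div_mul_cancel₀ _ hD]; ring

end Aux


theorem stmt_5 {Ω : Type*} [Fintype Ω] [MeasurableSpace Ω] [MeasurableSingletonClass Ω]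
    (μ₀ μ₁ : Measure Ω) [IsProbabilityMeasure μ₀] [IsProbabilityMeasure μ₁]
    (β : ℝ → ℝ)
    (hβ : ∀ α ∈ Set.Icc (0 : ℝ) 1, ∀ ψ : Ω → ℝ,
      IsNeymanPearson μ₀ μ₁ α ψ → β α = ∫ ω, ψ ω ∂μ₁)
    (hcont : ContinuousOn β (Set.Icc (0 : ℝ) 1)) :
    (∀ ψ : Ω → ℝ, IsMinimax μ₀ μ₁ ψ →
      (∃ α' : ℝ, ∃ φ' : Ω → ℝ, IsMostPowerful μ₀ μ₁ α' φ' ∧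
        (∫ ω, ψ ω ∂μ₁) < (∫ ω, φ' ω ∂μ₁) ∧
        (∫ ω, (1 - φ' ω) ∂μ₁) ≤ ∫ ω, (1 - ψ ω) ∂μ₁) →
      (∫ ω, ψ ω ∂μ₀) = 1 - ∫ ω, ψ ω ∂μ₁) ∧
    ∃ ψstar : Ω → ℝ, ∃ α ∈ Set.Icc (0 : ℝ) 1,
      IsMinimax μ₀ μ₁ ψstar ∧ IsNeymanPearson μ₀ μ₁ α ψstar ∧
      (∫ ω, ψstar ω ∂μ₀) = 1 - ∫ ω, ψstar ω ∂μ₁ := by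
  constructor
  · rintro ψ ⟨hψt, hmin⟩ ⟨α', φ', ⟨hφt, hφα, -⟩, hlt, hle⟩
    set t1 := ∫ ω, ψ ω ∂μ₀ with ht1
    set P := ∫ ω, ψ ω ∂μ₁ with hP
    set P' := ∫ ω, φ' ω ∂μ₁ with hP'
    set a' := ∫ ω, φ' ω ∂μ₀ with ha'
    have ht1n : 0 ≤ t1 := int_nonneg μ₀ hψt
    have ht11 : t1 ≤ 1 := int_le_one μ₀ hψt
    have hPn : 0 ≤ P := int_nonneg μ₁ hψt
    have hP1 : P ≤ 1 := int_le_one μ₁ hψt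
    have hP'1 : P' ≤ 1 := int_le_one μ₁ hφt
    have ha'n : 0 ≤ a' := int_nonneg μ₀ hφt
    have ha'1 : a' ≤ 1 := int_le_one μ₀ hφt
    rcases lt_trichotomy t1 (1 - P) with hc | hc | hc
    · exfalso
      set lam := ((1 - P) - t1)/2 with hlam
      have hlam0 : 0 < lam := by rw [hlam]; linarith
      have hlam1 : lam ≤ 1 := by rw [hlam]; linarith
      have htest : IsTest (fun ω => (1 - lam) * ψ ω + lam * φ' ω) := by
        intro ω
        dsimp only
        constructor
        · exact add_nonneg (mul_nonneg (by linarith) (hψt ω).1)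
            (mul_nonneg (by linarith) (hφt ω).1)
        · nlinarith [(hψt ω).2, (hφt ω).2, (hψt ω).1, (hφt ω).1]
      have hA : ∫ ω, ((1 - lam) * ψ ω + lam * φ' ω) ∂μ₀ = (1 - lam) * t1 + lam * a' :=
        int_comb μ₀ _ _ ψ φ'
      have hB : ∫ ω, (1 - ((1 - lam) * ψ ω + lam * φ' ω)) ∂μ₁
          = 1 - ((1 - lam) * P + lam * P') := by
        rw [int_one_sub, int_comb μ₁ _ _ ψ φ']
      have hmax := hmin (fun ω => (1 - lam) * ψ ω + lam * φ' ω) htest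
      rw [hA, hB, int_one_sub, ← hP] at hmax
      have h1 : max t1 (1 - P) = 1 - P := max_eq_right (le_of_lt hc)
      rw [h1] at hmax
      have hA' : (1 - lam) * t1 + lam * a' < 1 - P := by nlinarith
      have hB' : 1 - ((1 - lam) * P + lam * P') < 1 - P := by nlinarith
      exact absurd hmax (not_le.mpr (max_lt hA' hB'))
    · exact hc
    · exfalso
      set eps := (t1 - (1 - P))/2 with heps
      have heps0 : 0 < eps := by rw [heps]; linarith
      have heps1 : eps ≤ 1 := by rw [heps]; linarith
      have htest : IsTest (fun ω => (1 - eps) * ψ ω) := by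
        intro ω
        dsimp only
        constructor
        · exact mul_nonneg (by linarith) (hψt ω).1
        · nlinarith [(hψt ω).2, (hψt ω).1]
      have hA : ∫ ω, ((1 - eps) * ψ ω) ∂μ₀ = (1 - eps) * t1 := int_smul μ₀ _ ψ
      have hB : ∫ ω, (1 - (1 - eps) * ψ ω) ∂μ₁ = 1 - (1 - eps) * P := by
        rw [int_one_sub, int_smul μ₁ _ ψ]
      have hmax := hmin (fun ω => (1 - eps) * ψ ω) htest
      rw [hA, hB, int_one_sub, ← hP] at hmax
      have h1 : max t1 (1 - P) = t1 := max_eq_left (le_of_lt hc)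
      rw [h1] at hmax
      have hA' : (1 - eps) * t1 < t1 := by nlinarith
      have hB' : 1 - (1 - eps) * P < t1 := by nlinarith
      exact absurd hmax (not_le.mpr (max_lt hA' hB'))
  · have hβ0 : β 0 ≤ 1 := by
      obtain ⟨ψ₀, h₀⟩ := np_exists μ₀ μ₁ 0 le_rfl zero_le_one
      rw [hβ 0 ⟨le_rfl, zero_le_one⟩ ψ₀ h₀]
      exact int_le_one μ₁ (np_is_test μ₀ μ₁ h₀)
    have hβ1 : 0 ≤ β 1 := by
      obtain ⟨ψ₁, h₁⟩ := np_exists μ₀ μ₁ 1 zero_le_one le_rfl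
      rw [hβ 1 ⟨zero_le_one, le_rfl⟩ ψ₁ h₁]
      exact int_nonneg μ₁ (np_is_test μ₀ μ₁ h₁)
    have hgcont : ContinuousOn (fun a => a + β a - 1) (Set.Icc (0:ℝ) 1) :=
      ContinuousOn.sub (ContinuousOn.add continuousOn_id hcont) continuousOn_const
    have hivt := intermediate_value_Icc (zero_le_one (α := ℝ)) hgcont
    have h0mem : (0:ℝ) ∈ Set.Icc ((0:ℝ) + β 0 - 1) ((1:ℝ) + β 1 - 1) := by
      rw [Set.mem_Icc]; constructor <;> linarith
    obtain ⟨α₀, hα₀mem, hα₀⟩ := hivt h0mem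
    have hβα₀ : β α₀ = 1 - α₀ := by
      simp only at hα₀; linarith
    obtain ⟨ψs, hψs⟩ := np_exists μ₀ μ₁ α₀ hα₀mem.1 hα₀mem.2
    have htest := np_is_test μ₀ μ₁ hψs
    obtain ⟨c, hc, χ, hχ, hdef, hsize⟩ := id hψs
    have hpow : ∫ ω, ψs ω ∂μ₁ = 1 - α₀ := by
      rw [← hβ α₀ hα₀mem ψs hψs, hβα₀]
    refine ⟨ψs, α₀, hα₀mem, ⟨htest, ?_⟩, hψs, ?_⟩
    · intro ψ' hψ'
      have hL : max (∫ ω, ψs ω ∂μ₀) (∫ ω, (1 - ψs ω) ∂μ₁) = α₀ := by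
        rw [hsize, int_one_sub, hpow]
        simp
      rw [hL]
      by_cases h : ∫ ω, ψ' ω ∂μ₀ ≤ α₀
      · have hmp := (np_most_powerful μ₀ μ₁ hψs).2.2 ψ' hψ'
        have := hmp h
        rw [hpow] at this
        refine le_trans ?_ (le_max_right _ _)
        rw [int_one_sub]
        linarith
      · push_neg at h
        exact le_trans (le_of_lt h) (le_max_left _ _)
    · rw [hsize, hpow]
      ring
end
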